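/- Let Γ be a set of formulas, u1, u2 terms, v1, v2 variables, Γ1 = Γ[v1:=u1, v2:=u2] ∪ {u1 = u2}, and Γ2 = Γ[v1:=u2, v2:=u1] ∪ {u1 = u2}. Then for all terms t1, t2: if t1[v1:=u1, v2:=u2] !~_{Γ1} t2[v1:=u1, v2:=u2], then t1[v1:=u2, v2:=u1] !~_{Γ2} t2[v1:=u2, v2:=u1]. -/

import Mathlib

/-!
Since `u1 = u2` lies in `Γ1`, the two substitutions `[v1:=u1, v2:=u2]` and `[v1:=u2, v2:=u1]`
agree pointwise up to `≡_{Γ1}`, hence so do their results on every term. Consequently every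
equation of `Γ2` holds modulo `≡_{Γ1}`, so `≡_{Γ2} ⊆ ≡_{Γ1}`, and a dependence
`t1[v1:=u2, v2:=u1] ~_{Γ2} t2[v1:=u2, v2:=u1]` transfers to
`t1[v1:=u1, v2:=u2] ~_{Γ1} t2[v1:=u1, v2:=u2]`.
-/

namespace CLKID

/-- Terms of the language: variables, the constant `0`, and the unary function `s`. -/
inductive Tm : Type where
  | var : ℕ → Tm
  | zero : Tm
  | s : Tm → Tm
deriving DecidableEq

/-- `sIter n t` is the term `s^n t`. -/
def sIter : ℕ → Tm → Tm
  | 0, t => t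
  | n + 1, t => Tm.s (sIter n t)

/-- Substitution on terms. -/
def Tm.subst (θ : ℕ → Tm) : Tm → Tm
  | .var x => θ x
  | .zero => .zero
  | .s t => .s (t.subst θ)

/-- Free variables of a term. -/
def Tm.fv : Tm → Set ℕ
  | .var x => {x}
  | .zero => ∅
  | .s t => t.fv

/-- Subterms of a term. -/
def Tm.sub : Tm → Set Tm
  | .var x => {Tm.var x}
  | .zero => {Tm.zero}
  | .s t => insert (Tm.s t) t.sub

/-- The variable of a term (`none` if the term is of the form `s^n 0`). -/
def Tm.varOf : Tm → Option ℕ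
  | .var x => some x
  | .zero => none
  | .s t => t.varOf

/-- Formulas: equations, the two inductive-predicate atoms `Add1`/`Add2`,
    and the usual first-order connectives and quantifiers. -/
inductive Fm : Type where
  | eq : Tm → Tm → Fm
  | add1 : Tm → Tm → Tm → Fm
  | add2 : Tm → Tm → Tm → Fm
  | not : Fm → Fm
  | and : Fm → Fm → Fm
  | or : Fm → Fm → Fm
  | imp : Fm → Fm → Fm
  | all : ℕ → Fm → Fm
  | ex : ℕ → Fm → Fm
deriving DecidableEq

/-- Substitution on formulas. -/
def Fm.subst (θ : ℕ → Tm) : Fm → Fm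
  | .eq t u => .eq (t.subst θ) (u.subst θ)
  | .add1 a b c => .add1 (a.subst θ) (b.subst θ) (c.subst θ)
  | .add2 a b c => .add2 (a.subst θ) (b.subst θ) (c.subst θ)
  | .not φ => .not (φ.subst θ)
  | .and φ ψ => .and (φ.subst θ) (ψ.subst θ)
  | .or φ ψ => .or (φ.subst θ) (ψ.subst θ)
  | .imp φ ψ => .imp (φ.subst θ) (ψ.subst θ)
  | .all x φ => .all x (φ.subst (Function.update θ x (Tm.var x)))
  | .ex x φ => .ex x (φ.subst (Function.update θ x (Tm.var x)))

/-- Free variables of a formula. -/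
def Fm.fv : Fm → Set ℕ
  | .eq t u => t.fv ∪ u.fv
  | .add1 a b c => a.fv ∪ b.fv ∪ c.fv
  | .add2 a b c => a.fv ∪ b.fv ∪ c.fv
  | .not φ => φ.fv
  | .and φ ψ => φ.fv ∪ ψ.fv
  | .or φ ψ => φ.fv ∪ ψ.fv
  | .imp φ ψ => φ.fv ∪ ψ.fv
  | .all x φ => φ.fv \ {x}
  | .ex x φ => φ.fv \ {x}

/-- Terms occurring in a formula. -/
def Fm.tms : Fm → Set Tm
  | .eq t u => t.sub ∪ u.sub
  | .add1 a b c => a.sub ∪ b.sub ∪ c.sub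
  | .add2 a b c => a.sub ∪ b.sub ∪ c.sub
  | .not φ => φ.tms
  | .and φ ψ => φ.tms ∪ ψ.tms
  | .or φ ψ => φ.tms ∪ ψ.tms
  | .imp φ ψ => φ.tms ∪ ψ.tms
  | .all _ φ => φ.tms
  | .ex _ φ => φ.tms

/-- The substitution `[x := t]`. -/
def sub1 (x : ℕ) (t : Tm) : ℕ → Tm := fun y => if y = x then t else Tm.var y

/-- The simultaneous substitution `[v1 := t, v2 := u]`. -/
def sub2 (v1 v2 : ℕ) (t u : Tm) : ℕ → Tm :=
  fun z => if z = v1 then t else if z = v2 then u else Tm.var z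

/-- `≡_Γ`: the smallest congruence relation on terms containing all pairs `(t, u)`
    with the equation `t = u` in `Γ`. -/
inductive EqvTm (Γ : Set Fm) : Tm → Tm → Prop where
  | base {t u : Tm} : Fm.eq t u ∈ Γ → EqvTm Γ t u
  | refl (t : Tm) : EqvTm Γ t t
  | symm {t u : Tm} : EqvTm Γ t u → EqvTm Γ u t
  | trans {t u v : Tm} : EqvTm Γ t u → EqvTm Γ u v → EqvTm Γ t v
  | sCongr {t u : Tm} : EqvTm Γ t u → EqvTm Γ (Tm.s t) (Tm.s u)

/-- `t ~_Γ u` : `s^n t ≡_Γ s^m u` for some naturals `n`, `m`. -/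
def DepTm (Γ : Set Fm) (t u : Tm) : Prop := ∃ n m : ℕ, EqvTm Γ (sIter n t) (sIter m u)

/-- A sequent: a pair of finite sets of formulas. -/
structure Seq where
  ant : Finset Fm
  suc : Finset Fm

/-- The antecedent of a sequent, as a set of formulas. -/
def antSet (S : Seq) : Set Fm := ↑S.ant

/-- `[Γ]` from Lemma on chains: `{ s^n t1 = s^n t2 | t1 = t2 ∈ Γ or t2 = t1 ∈ Γ }`. -/
def brkt (Γ : Set Fm) : Set Fm :=
  {φ | ∃ (n : ℕ) (t1 t2 : Tm), φ = Fm.eq (sIter n t1) (sIter n t2) ∧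
        (Fm.eq t1 t2 ∈ Γ ∨ Fm.eq t2 t1 ∈ Γ)}

/-- `B1(Γ ⊢ Δ)` : second arguments of `Add1` atoms in the consequent. -/
def B1 (S : Seq) : Set Tm := {b | ∃ a c, Fm.add1 a b c ∈ S.suc}

/-- `C(Γ ⊢ Δ)` : third arguments of `Add2` atoms in the antecedent
    or `Add1` atoms in the consequent. -/
def Cset (S : Seq) : Set Tm :=
  {c | (∃ a b, Fm.add2 a b c ∈ S.ant) ∨ (∃ a b, Fm.add1 a b c ∈ S.suc)}

/-- Index sequent. -/
def IndexSequent (S : Seq) : Prop :=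
  (∀ t ∈ B1 S, ∀ u ∈ Cset S, ¬ DepTm (antSet S) t u) ∧
  (∀ b ∈ B1 S, ∀ b' ∈ B1 S, ∀ n m : ℕ, EqvTm (antSet S) (sIter n b) (sIter m b') → n = m)

section

variable {Γ Δ : Set Fm}

theorem EqvTm.sIter {a b : Tm} (n : ℕ) (h : EqvTm Γ a b) :
    EqvTm Γ (sIter n a) (sIter n b) := by
  induction n with
  | zero => exact h
  | succ n ih => exact ih.sCongr

theorem EqvTm.mono_of_base (hbase : ∀ t u, Fm.eq t u ∈ Γ → EqvTm Δ t u) {a b : Tm}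
    (h : EqvTm Γ a b) : EqvTm Δ a b := by
  induction h with
  | base hm => exact hbase _ _ hm
  | refl t => exact .refl t
  | symm _ ih => exact ih.symm
  | trans _ _ ih₁ ih₂ => exact ih₁.trans ih₂
  | sCongr _ ih => exact ih.sCongr

theorem EqvTm.subst_congr {θ θ' : ℕ → Tm} (hθ : ∀ x, EqvTm Γ (θ x) (θ' x)) (t : Tm) :
    EqvTm Γ (t.subst θ) (t.subst θ') := by
  induction t with
  | var x => exact hθ x
  | zero => exact .refl _
  | s t ih => exact ih.sCongr

theorem EqvTm.sub2_swap {u1 u2 : Tm} (v1 v2 : ℕ) (h : EqvTm Γ u1 u2) (x : ℕ) :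
    EqvTm Γ (sub2 v1 v2 u2 u1 x) (sub2 v1 v2 u1 u2 x) := by
  unfold sub2
  split_ifs
  · exact h.symm
  · exact h
  · exact .refl _

theorem Fm.exists_of_subst_eq_eq {θ : ℕ → Tm} {φ : Fm} {t u : Tm} (h : φ.subst θ = Fm.eq t u) :
    ∃ a b, φ = Fm.eq a b ∧ a.subst θ = t ∧ b.subst θ = u := by
  cases φ <;> simp only [Fm.subst, reduceCtorEq, Fm.eq.injEq] at h
  exact ⟨_, _, rfl, h⟩

theorem EqvTm.of_mem_image_subst {θ θ' : ℕ → Tm} (hθ : ∀ x, EqvTm Δ (θ x) (θ' x))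
    (hΓ : ∀ φ ∈ Γ, φ.subst θ' ∈ Δ) {t u : Tm} (h : Fm.eq t u ∈ Fm.subst θ '' Γ) :
    EqvTm Δ t u := by
  obtain ⟨φ, hφ, hsub⟩ := h
  obtain ⟨a, b, rfl, rfl, rfl⟩ := Fm.exists_of_subst_eq_eq hsub
  exact ((EqvTm.subst_congr hθ a).trans (.base (hΓ _ hφ))).trans (EqvTm.subst_congr hθ b).symm

theorem DepTm.mono (hΓΔ : ∀ {a b}, EqvTm Γ a b → EqvTm Δ a b) {t u : Tm} (h : DepTm Γ t u) :
    DepTm Δ t u :=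
  let ⟨n, m, h⟩ := h
  ⟨n, m, hΓΔ h⟩

theorem DepTm.congr {t t' u u' : Tm} (ht : EqvTm Γ t t') (hu : EqvTm Γ u u')
    (h : DepTm Γ t u) : DepTm Γ t' u' :=
  let ⟨n, m, h⟩ := h
  ⟨n, m, ((ht.sIter n).symm.trans h).trans (hu.sIter m)⟩

end

/-- With `Γ1 = Γ[v1:=u1, v2:=u2] ∪ {u1 = u2}` and
    `Γ2 = Γ[v1:=u2, v2:=u1] ∪ {u1 = u2}`:
    `t1[v1:=u1, v2:=u2] !~_{Γ1} t2[v1:=u1, v2:=u2]` implies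
    `t1[v1:=u2, v2:=u1] !~_{Γ2} t2[v1:=u2, v2:=u1]`. -/
theorem dep_eqL (Γ : Set Fm) (u1 u2 : Tm) (v1 v2 : ℕ) (t1 t2 : Tm)
    (h : ¬ DepTm ((Fm.subst (sub2 v1 v2 u1 u2) '' Γ) ∪ {Fm.eq u1 u2})
          (t1.subst (sub2 v1 v2 u1 u2)) (t2.subst (sub2 v1 v2 u1 u2))) :
    ¬ DepTm ((Fm.subst (sub2 v1 v2 u2 u1) '' Γ) ∪ {Fm.eq u1 u2})
      (t1.subst (sub2 v1 v2 u2 u1)) (t2.subst (sub2 v1 v2 u2 u1)) := by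
  set Γ1 : Set Fm := (Fm.subst (sub2 v1 v2 u1 u2) '' Γ) ∪ {Fm.eq u1 u2}
  have h12 : EqvTm Γ1 u1 u2 := .base (Or.inr rfl)
  have hswap := EqvTm.sub2_swap v1 v2 h12
  have hΓ21 : ∀ {a b}, EqvTm ((Fm.subst (sub2 v1 v2 u2 u1) '' Γ) ∪ {Fm.eq u1 u2}) a b →
      EqvTm Γ1 a b := by
    refine EqvTm.mono_of_base fun t u ht => ?_
    rcases ht with ht | ht
    · exact EqvTm.of_mem_image_subst hswap (fun φ hφ => Or.inl ⟨φ, hφ, rfl⟩) ht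
    · cases ht
      exact h12
  exact fun hdep => h ((hdep.mono hΓ21).congr
    (EqvTm.subst_congr hswap t1) (EqvTm.subst_congr hswap t2))

end CLKID
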